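/- arXiv:1607.04375 — 3 statements merged into one kernel-verified Lean document; each statement's English description precedes it below -/
import Mathlib

section
/- If a digraph $(V,W)$ with finite vertex set is weakly connected, then the post-symmetrized graph $(V, W_e^* W_e)$ with $W_e = I + W$ is a connected undirected graph. -/
open Matrix

/-- If a finite digraph `(V, W)` is weakly connected (its underlying undirected graph,
with weight matrix `(W + Wᵀ)/2`, is connected), then the post-symmetrized (OS) graph,
with weight matrix `Wₑᵀ * Wₑ` where `Wₑ = I + W`, is a connected undirected graph. -/
theorem post_symmetrized_connected {V : Type*} [Fintype V] [DecidableEq V]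
    (W : Matrix V V ℝ) (hW : ∀ u v, 0 ≤ W u v)
    (hconn : ∀ u v : V,
      Relation.ReflTransGen (fun a b => 0 < (W a b + W b a) / 2) u v) :
    ∀ u v : V,
      Relation.ReflTransGen (fun a b => 0 < ((1 + W)ᵀ * (1 + W) : Matrix V V ℝ) a b) u v := by
  have hWe : ∀ a b : V, 0 ≤ (1 + W : Matrix V V ℝ) a b := by
    intro a b
    rcases eq_or_ne a b with rfl | h
    · simp only [Matrix.add_apply, Matrix.one_apply_eq]; linarith [hW a a]
    · simp only [Matrix.add_apply, Matrix.one_apply_ne h]; linarith [hW a b]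
  have hdiag : ∀ a : V, 0 < (1 + W : Matrix V V ℝ) a a := by
    intro a
    simp only [Matrix.add_apply, Matrix.one_apply_eq]
    have := hW a a; linarith
  have key : ∀ a b : V, 0 < (W a b + W b a) / 2 →
      0 < ((1 + W)ᵀ * (1 + W) : Matrix V V ℝ) a b := by
    intro a b hab
    rw [Matrix.mul_apply]
    simp only [Matrix.transpose_apply]
    apply Finset.sum_pos'
    · intro k _
      exact mul_nonneg (hWe k a) (hWe k b)
    · have hcase : 0 < W a b ∨ 0 < W b a := by
        by_contra h
        push_neg at h
        have h1 : W a b = 0 := le_antisymm h.1 (hW a b)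
        have h2 : W b a = 0 := le_antisymm h.2 (hW b a)
        rw [h1, h2] at hab; norm_num at hab
      rcases hcase with h | h
      · refine ⟨a, Finset.mem_univ a, mul_pos (hdiag a) ?_⟩
        have := hWe a b
        have hle : W a b ≤ (1 + W : Matrix V V ℝ) a b := by
          rcases eq_or_ne a b with rfl | h'
          · simp only [Matrix.add_apply, Matrix.one_apply_eq]; linarith
          · simp only [Matrix.add_apply, Matrix.one_apply_ne h']; linarith
        linarith
      · refine ⟨b, Finset.mem_univ b, mul_pos ?_ (hdiag b)⟩
        have hle : W b a ≤ (1 + W : Matrix V V ℝ) b a := by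
          rcases eq_or_ne b a with rfl | h'
          · simp only [Matrix.add_apply, Matrix.one_apply_eq]; linarith [hW b b]
          · simp only [Matrix.add_apply, Matrix.one_apply_ne h']; linarith [hW b a]
        linarith
  intro u v
  exact Relation.ReflTransGen.mono (fun a b hab => key a b hab) u v (hconn u v)
end

section
/- With the local tree polynomials $\phi_0,\dots,\phi_{m-1}$ on $[a,a+w)$ as defined (with $\phi_0 = \mathbf{1}_{[a,a+w)}$ and $\phi_k = p_k\mathbf{1}_{J_k} - P_k\mathbf{1}_{I_k}$), one has $\int_a^{a+w} \phi_k(x)\phi_\ell(x)\,dx = w$ if $k=\ell=0$, $= p_k P_k P_{k+1}$ if $k = \ell \ge 1$, and $=0$ if $k \ne \ell$. -/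
noncomputable section

open MeasureTheory

/-- Partial sums of the weights: `Ps p k = p 0 + ⋯ + p (k-1)`. -/
def Ps (p : ℕ → ℝ) (k : ℕ) : ℝ := ∑ j ∈ Finset.range k, p j

/-- The local tree polynomials on `[a, a + w)` with `w = Ps p m`:
`phi a p m 0 = 𝟙_{[a,a+w)}` and for `k ≥ 1`,
`phi a p m k = p k · 𝟙_{J_k} - P_k · 𝟙_{I_k}` where `J_k = [a, a+P_k)`,
`I_k = [a+P_k, a+P_{k+1})`. -/
def phi (a : ℝ) (p : ℕ → ℝ) (m k : ℕ) : ℝ → ℝ :=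
  if k = 0 then Set.indicator (Set.Ico a (a + Ps p m)) 1
  else fun x => p k * Set.indicator (Set.Ico a (a + Ps p k)) 1 x
    - Ps p k * Set.indicator (Set.Ico (a + Ps p k) (a + Ps p (k + 1))) 1 x

def ind (c d : ℝ) : ℝ → ℝ := Set.indicator (Set.Ico c d) 1

lemma ind_def (c d : ℝ) : Set.indicator (Set.Ico c d) (1 : ℝ → ℝ) = ind c d := rfl

lemma ind_integrable (c d : ℝ) : Integrable (ind c d) := by
  rw [ind, integrable_indicator_iff measurableSet_Ico]
  exact integrableOn_const measure_Ico_lt_top.ne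

lemma ind_ii (a b c d : ℝ) : IntervalIntegrable (ind c d) volume a b :=
  (ind_integrable c d).intervalIntegrable

lemma integ_ind {a b c d : ℝ} (hac : a ≤ c) (hcd : c ≤ d) (hdb : d ≤ b) :
    ∫ x in a..b, ind c d x = d - c := by
  rw [ind, intervalIntegral.integral_of_le (by linarith), integral_indicator measurableSet_Ico,
    Measure.restrict_restrict measurableSet_Ico]
  simp only [Pi.one_apply]
  rw [setIntegral_const]
  have hv : volume (Set.Ico c d ∩ Set.Ioc a b) = ENNReal.ofReal (d - c) := by
    apply le_antisymm
    · calc volume (Set.Ico c d ∩ Set.Ioc a b) ≤ volume (Set.Ico c d) :=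
            measure_mono Set.inter_subset_left
        _ = ENNReal.ofReal (d - c) := Real.volume_Ico
    · calc ENNReal.ofReal (d - c) = volume (Set.Ioo c d) := Real.volume_Ioo.symm
        _ ≤ volume (Set.Ico c d ∩ Set.Ioc a b) := measure_mono (fun x hx => ⟨⟨le_of_lt hx.1, hx.2⟩,
            ⟨lt_of_le_of_lt hac hx.1, le_trans (le_of_lt hx.2) hdb⟩⟩)
  rw [measureReal_def, hv, ENNReal.toReal_ofReal (by linarith : (0:ℝ) ≤ d - c)]
  simp

lemma integ_ind_zero {c d : ℝ} (h : d ≤ c) (a b : ℝ) :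
    ∫ x in a..b, ind c d x = 0 := by
  rw [ind, Set.Ico_eq_empty (not_lt.2 h), Set.indicator_empty]
  simp

lemma ind_mul (c d e f : ℝ) (x : ℝ) :
    ind c d x * ind e f x = ind (max c e) (min d f) x := by
  rw [ind, ind, ind, ← Set.Ico_inter_Ico, Set.inter_indicator_one]; rfl

lemma master (a b α β γ δ s1 e1 s2 e2 s3 e3 s4 e4 : ℝ) :
    ∫ x in a..b, (α * ind s1 e1 x - β * ind s2 e2 x) * (γ * ind s3 e3 x - δ * ind s4 e4 x)
    = α * γ * (∫ x in a..b, ind (max s1 s3) (min e1 e3) x)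
      - α * δ * (∫ x in a..b, ind (max s1 s4) (min e1 e4) x)
      - β * γ * (∫ x in a..b, ind (max s2 s3) (min e2 e3) x)
      + β * δ * (∫ x in a..b, ind (max s2 s4) (min e2 e4) x) := by
  have e : ∀ x, (α * ind s1 e1 x - β * ind s2 e2 x) * (γ * ind s3 e3 x - δ * ind s4 e4 x)
      = α * γ * ind (max s1 s3) (min e1 e3) x - α * δ * ind (max s1 s4) (min e1 e4) x
        - β * γ * ind (max s2 s3) (min e2 e3) x + β * δ * ind (max s2 s4) (min e2 e4) x := by
    intro x
    rw [← ind_mul, ← ind_mul, ← ind_mul, ← ind_mul]; ring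
  rw [intervalIntegral.integral_congr (fun x _ => e x)]
  have i1 := ((ind_integrable (max s1 s3) (min e1 e3)).const_mul (α * γ)).intervalIntegrable
    (a := a) (b := b) (μ := volume)
  have i2 := ((ind_integrable (max s1 s4) (min e1 e4)).const_mul (α * δ)).intervalIntegrable
    (a := a) (b := b) (μ := volume)
  have i3 := ((ind_integrable (max s2 s3) (min e2 e3)).const_mul (β * γ)).intervalIntegrable
    (a := a) (b := b) (μ := volume)
  have i4 := ((ind_integrable (max s2 s4) (min e2 e4)).const_mul (β * δ)).intervalIntegrable
    (a := a) (b := b) (μ := volume)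
  rw [intervalIntegral.integral_add ((i1.sub i2).sub i3) i4,
    intervalIntegral.integral_sub (i1.sub i2) i3, intervalIntegral.integral_sub i1 i2,
    intervalIntegral.integral_const_mul, intervalIntegral.integral_const_mul,
    intervalIntegral.integral_const_mul, intervalIntegral.integral_const_mul]

lemma Ps_mono {p : ℕ → ℝ} {m : ℕ} (hp : ∀ j < m, 0 < p j) {i j : ℕ} (hij : i ≤ j)
    (hjm : j ≤ m) : Ps p i ≤ Ps p j := by
  apply Finset.sum_le_sum_of_subset_of_nonneg (Finset.range_subset_range.2 hij)
  intro x hx _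
  exact (hp x (lt_of_lt_of_le (Finset.mem_range.1 hx) hjm)).le

lemma Ps_zero (p : ℕ → ℝ) : Ps p 0 = 0 := Finset.sum_range_zero p

lemma Ps_succ (p : ℕ → ℝ) (k : ℕ) : Ps p (k + 1) = Ps p k + p k := Finset.sum_range_succ p k

/-- Off-diagonal case, `k < l`, both possibly zero. -/
lemma offdiag (a : ℝ) (m : ℕ) (hm : 2 ≤ m) (p : ℕ → ℝ) (hp : ∀ j < m, 0 < p j)
    (k l : ℕ) (hl : l ≤ m - 1) (hkl : k < l) :
    ∫ x in a..(a + Ps p m), phi a p m k x * phi a p m l x = 0 := by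
  have hl1m : l + 1 ≤ m := by omega
  have hl0 : l ≠ 0 := by omega
  have h0l : (0:ℝ) ≤ Ps p l := by
    have := Ps_mono hp (Nat.zero_le l) (by omega); rwa [Ps_zero] at this
  have hll1 : Ps p l ≤ Ps p (l + 1) := Ps_mono hp (by omega) hl1m
  have hl1w : Ps p (l + 1) ≤ Ps p m := Ps_mono hp hl1m le_rfl
  have hphil : phi a p m l = fun x => p l * ind a (a + Ps p l) x
      - Ps p l * ind (a + Ps p l) (a + Ps p (l + 1)) x := by
    rw [phi, if_neg hl0]; simp only [ind_def]
  rcases Nat.eq_zero_or_pos k with hk0 | hk0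
  · subst hk0
    have hphi0 : phi a p m 0 = ind a (a + Ps p m) := by
      rw [phi, if_pos rfl, ind_def]
    have e : ∀ x, phi a p m 0 x * phi a p m l x
        = p l * ind a (a + Ps p l) x - Ps p l * ind (a + Ps p l) (a + Ps p (l + 1)) x := by
      intro x
      rw [hphi0, hphil]
      have h1 : ind a (a + Ps p m) x * ind a (a + Ps p l) x = ind a (a + Ps p l) x := by
        rw [ind_mul, max_self, min_eq_right (by linarith)]
      have h2 : ind a (a + Ps p m) x * ind (a + Ps p l) (a + Ps p (l + 1)) x
          = ind (a + Ps p l) (a + Ps p (l + 1)) x := by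
        rw [ind_mul, max_eq_right (by linarith), min_eq_right (by linarith)]
      calc ind a (a + Ps p m) x * (p l * ind a (a + Ps p l) x
            - Ps p l * ind (a + Ps p l) (a + Ps p (l + 1)) x)
          = p l * (ind a (a + Ps p m) x * ind a (a + Ps p l) x)
            - Ps p l * (ind a (a + Ps p m) x * ind (a + Ps p l) (a + Ps p (l + 1)) x) := by ring
        _ = _ := by rw [h1, h2]
    rw [intervalIntegral.integral_congr (fun x _ => e x),
      intervalIntegral.integral_sub (((ind_integrable _ _).const_mul _).intervalIntegrable)
        (((ind_integrable _ _).const_mul _).intervalIntegrable),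
      intervalIntegral.integral_const_mul, intervalIntegral.integral_const_mul,
      integ_ind le_rfl (by linarith) (by linarith),
      integ_ind (by linarith) (by linarith) (by linarith), Ps_succ]
    ring
  · have hk0' : k ≠ 0 := by omega
    have hk1l : k + 1 ≤ l := hkl
    have h0k : (0:ℝ) ≤ Ps p k := by
      have := Ps_mono hp (Nat.zero_le k) (by omega); rwa [Ps_zero] at this
    have hkk1 : Ps p k ≤ Ps p (k + 1) := Ps_mono hp (by omega) (by omega)
    have hk1l' : Ps p (k + 1) ≤ Ps p l := Ps_mono hp hk1l (by omega)
    have hphik : phi a p m k = fun x => p k * ind a (a + Ps p k) x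
        - Ps p k * ind (a + Ps p k) (a + Ps p (k + 1)) x := by
      rw [phi, if_neg hk0']; simp only [ind_def]
    simp only [hphik, hphil]
    rw [master]
    rw [max_self, min_eq_left (by linarith : a + Ps p k ≤ a + Ps p l),
      max_eq_right (by linarith : a ≤ a + Ps p l),
      min_eq_left (by linarith : a + Ps p k ≤ a + Ps p (l + 1)),
      max_eq_left (by linarith : a ≤ a + Ps p k),
      min_eq_left (by linarith : a + Ps p (k + 1) ≤ a + Ps p l),
      max_eq_right (by linarith : a + Ps p k ≤ a + Ps p l),
      min_eq_left (by linarith : a + Ps p (k + 1) ≤ a + Ps p (l + 1))]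
    rw [integ_ind le_rfl (by linarith) (by linarith),
      integ_ind_zero (by linarith),
      integ_ind (by linarith) (by linarith) (by linarith),
      integ_ind_zero (by linarith), Ps_succ]
    ring

/-- Orthogonality of the local tree polynomials. -/
theorem phi_orthogonality (a : ℝ) (m : ℕ) (hm : 2 ≤ m) (p : ℕ → ℝ) (hp : ∀ j < m, 0 < p j)
    (k l : ℕ) (hk : k ≤ m - 1) (hl : l ≤ m - 1) :
    (k = 0 → l = 0 → ∫ x in a..(a + Ps p m), phi a p m k x * phi a p m l x = Ps p m) ∧
    (k = l → 1 ≤ k →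
      ∫ x in a..(a + Ps p m), phi a p m k x * phi a p m l x = p k * Ps p k * Ps p (k + 1)) ∧
    (k ≠ l → ∫ x in a..(a + Ps p m), phi a p m k x * phi a p m l x = 0) := by
  have h0w : (0:ℝ) ≤ Ps p m := by
    have := Ps_mono hp (Nat.zero_le m) le_rfl; rwa [Ps_zero] at this
  refine ⟨?_, ?_, ?_⟩
  · rintro rfl rfl
    have hphi0 : phi a p m 0 = ind a (a + Ps p m) := by rw [phi, if_pos rfl, ind_def]
    have e : ∀ x, phi a p m 0 x * phi a p m 0 x = ind a (a + Ps p m) x := by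
      intro x; rw [hphi0, ind_mul, max_self, min_self]
    rw [intervalIntegral.integral_congr (fun x _ => e x),
      integ_ind le_rfl (by linarith) le_rfl]
    ring
  · rintro rfl h1k
    have hk0' : k ≠ 0 := by omega
    have h0k : (0:ℝ) ≤ Ps p k := by
      have := Ps_mono hp (Nat.zero_le k) (by omega); rwa [Ps_zero] at this
    have hkk1 : Ps p k ≤ Ps p (k + 1) := Ps_mono hp (by omega) (by omega)
    have hk1w : Ps p (k + 1) ≤ Ps p m := Ps_mono hp (by omega) le_rfl
    have hphik : phi a p m k = fun x => p k * ind a (a + Ps p k) x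
        - Ps p k * ind (a + Ps p k) (a + Ps p (k + 1)) x := by
      rw [phi, if_neg hk0']; simp only [ind_def]
    simp only [hphik]
    rw [master]
    rw [max_self, min_self, max_eq_right (by linarith : a ≤ a + Ps p k),
      min_eq_left (by linarith : a + Ps p k ≤ a + Ps p (k + 1)),
      max_eq_left (by linarith : a ≤ a + Ps p k),
      min_eq_right (by linarith : a + Ps p k ≤ a + Ps p (k + 1)),
      max_self, min_self]
    rw [integ_ind le_rfl (by linarith) (by linarith),
      integ_ind_zero le_rfl,
      integ_ind (by linarith) (by linarith) (by linarith), Ps_succ]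
    ring
  · intro hkl
    rcases lt_or_gt_of_ne hkl with h | h
    · exact offdiag a m hm p hp k l hl h
    · have e : ∀ x, phi a p m k x * phi a p m l x = phi a p m l x * phi a p m k x :=
        fun x => mul_comm _ _
      rw [intervalIntegral.integral_congr (fun x _ => e x)]
      exact offdiag a m hm p hp l k hk h
end
end

section
/- For bi-sequences $h_1, h_2$ with finite Hardy–Krause type variation $\mathcal V(h) = \sup_{\mathbf k}|h(\mathbf k)| + \sup_{k_1}\sum_{k_2}|\Delta_2 h(\mathbf k)| + \sup_{k_2}\sum_{k_1}|\Delta_1 h(\mathbf k)| + \sum_{\mathbf k}|\Delta_1\Delta_2 h(\mathbf k)|$, there is an absolute constant $c$ such that $\mathcal V(h_1 h_2) \le c\,\mathcal V(h_1)\,\mathcal V(h_2)$. -/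
open scoped ENNReal NNReal

noncomputable section

/-- Forward difference in the first variable. -/
def D1 (h : ℕ → ℕ → ℝ) : ℕ → ℕ → ℝ := fun k1 k2 => h (k1 + 1) k2 - h k1 k2

/-- Forward difference in the second variable. -/
def D2 (h : ℕ → ℕ → ℝ) : ℕ → ℕ → ℝ := fun k1 k2 => h k1 (k2 + 1) - h k1 k2

/-- The Hardy–Krause type variation of a bi-sequence:
`V(h) = sup |h| + sup_{k1} ∑_{k2} |Δ₂h| + sup_{k2} ∑_{k1} |Δ₁h| + ∑ |Δ₁Δ₂h|`
(valued in `ℝ≥0∞`). -/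
def Vbi (h : ℕ → ℕ → ℝ) : ℝ≥0∞ :=
  (⨆ k1, ⨆ k2, ENNReal.ofReal |h k1 k2|)
    + (⨆ k1, ∑' k2, ENNReal.ofReal |D2 h k1 k2|)
    + (⨆ k2, ∑' k1, ENNReal.ofReal |D1 h k1 k2|)
    + ∑' (k1) (k2), ENNReal.ofReal |D1 (D2 h) k1 k2|

namespace VbiAux

/-- sup term -/
def Av (h : ℕ → ℕ → ℝ) : ℝ≥0∞ := ⨆ k1, ⨆ k2, ENNReal.ofReal |h k1 k2|
def Bv (h : ℕ → ℕ → ℝ) : ℝ≥0∞ := ⨆ k1, ∑' k2, ENNReal.ofReal |D2 h k1 k2|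
def Cv (h : ℕ → ℕ → ℝ) : ℝ≥0∞ := ⨆ k2, ∑' k1, ENNReal.ofReal |D1 h k1 k2|
def Ev (h : ℕ → ℕ → ℝ) : ℝ≥0∞ := ∑' (k1) (k2), ENNReal.ofReal |D1 (D2 h) k1 k2|

lemma Vbi_eq (h : ℕ → ℕ → ℝ) : Vbi h = Av h + Bv h + Cv h + Ev h := rfl

lemma le_Av (h : ℕ → ℕ → ℝ) (k1 k2 : ℕ) : ENNReal.ofReal |h k1 k2| ≤ Av h :=
  le_iSup_of_le k1 (le_iSup_of_le k2 le_rfl)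

lemma le_Bv (h : ℕ → ℕ → ℝ) (k1 : ℕ) :
    (∑' k2, ENNReal.ofReal |D2 h k1 k2|) ≤ Bv h := le_iSup_of_le k1 le_rfl

lemma le_Cv (h : ℕ → ℕ → ℝ) (k2 : ℕ) :
    (∑' k1, ENNReal.ofReal |D1 h k1 k2|) ≤ Cv h := le_iSup_of_le k2 le_rfl

lemma Av_le (h : ℕ → ℕ → ℝ) : Av h ≤ Vbi h := by
  rw [Vbi_eq]; exact le_add_right (le_add_right le_self_add)

lemma AvBv_le (h : ℕ → ℕ → ℝ) : Av h + Bv h ≤ Vbi h := by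
  rw [Vbi_eq]; exact le_add_right le_self_add

lemma BvEv_le (h : ℕ → ℕ → ℝ) : Bv h + Ev h ≤ Vbi h := by
  rw [Vbi_eq]
  calc Bv h + Ev h ≤ (Av h + Bv h + Cv h) + Ev h := by
        gcongr
        exact le_add_right le_add_self
    _ = _ := rfl

lemma CvEv_le (h : ℕ → ℕ → ℝ) : Cv h + Ev h ≤ Vbi h := by
  rw [Vbi_eq]
  calc Cv h + Ev h ≤ (Av h + Bv h + Cv h) + Ev h := by
        gcongr
        exact le_add_self
    _ = _ := rfl

lemma Bv_le (h : ℕ → ℕ → ℝ) : Bv h ≤ Vbi h := by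
  rw [Vbi_eq]; exact le_add_right (le_add_right le_add_self)

lemma Cv_le (h : ℕ → ℕ → ℝ) : Cv h ≤ Vbi h := by
  rw [Vbi_eq]; exact le_add_right le_add_self

lemma Ev_le (h : ℕ → ℕ → ℝ) : Ev h ≤ Vbi h := by
  rw [Vbi_eq]; exact le_add_self

lemma ofReal_abs_mul (x y : ℝ) :
    ENNReal.ofReal |x * y| = ENNReal.ofReal |x| * ENNReal.ofReal |y| := by
  rw [abs_mul, ENNReal.ofReal_mul (abs_nonneg x)]

lemma ofReal_abs_add (x y : ℝ) :
    ENNReal.ofReal |x + y| ≤ ENNReal.ofReal |x| + ENNReal.ofReal |y| :=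
  le_trans (ENNReal.ofReal_le_ofReal (abs_add_le x y)) ENNReal.ofReal_add_le

lemma telescope (f : ℕ → ℝ) (n : ℕ) :
    ENNReal.ofReal |f n| ≤
      ENNReal.ofReal |f 0| + ∑' j, ENNReal.ofReal |f (j + 1) - f j| := by
  have hf : |f n| ≤ |f 0| + ∑ j ∈ Finset.range n, |f (j + 1) - f j| := by
    have h : f n = f 0 + ∑ j ∈ Finset.range n, (f (j + 1) - f j) := by
      rw [Finset.sum_range_sub]; ring
    rw [h]
    exact (abs_add_le _ _).trans (add_le_add le_rfl (Finset.abs_sum_le_sum_abs _ _))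
  calc ENNReal.ofReal |f n|
      ≤ ENNReal.ofReal (|f 0| + ∑ j ∈ Finset.range n, |f (j + 1) - f j|) :=
        ENNReal.ofReal_le_ofReal hf
    _ = ENNReal.ofReal |f 0| + ∑ j ∈ Finset.range n, ENNReal.ofReal |f (j + 1) - f j| := by
        rw [ENNReal.ofReal_add (abs_nonneg _) (Finset.sum_nonneg fun _ _ => abs_nonneg _),
          ENNReal.ofReal_sum_of_nonneg (fun _ _ => abs_nonneg _)]
    _ ≤ _ := by gcongr; exact ENNReal.sum_le_tsum _

lemma D2_mul (h1 h2 : ℕ → ℕ → ℝ) (k1 k2 : ℕ) :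
    D2 (h1 * h2) k1 k2 = h1 k1 (k2 + 1) * D2 h2 k1 k2 + D2 h1 k1 k2 * h2 k1 k2 := by
  simp only [D2, Pi.mul_apply]; ring

lemma D1_mul (h1 h2 : ℕ → ℕ → ℝ) (k1 k2 : ℕ) :
    D1 (h1 * h2) k1 k2 = h1 (k1 + 1) k2 * D1 h2 k1 k2 + D1 h1 k1 k2 * h2 k1 k2 := by
  simp only [D1, Pi.mul_apply]; ring

lemma D1D2_mul (h1 h2 : ℕ → ℕ → ℝ) (k1 k2 : ℕ) :
    D1 (D2 (h1 * h2)) k1 k2 =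
      h1 (k1 + 1) (k2 + 1) * D1 (D2 h2) k1 k2 + D1 h1 k1 (k2 + 1) * D2 h2 k1 k2
        + (D2 h1 (k1 + 1) k2 * D1 h2 k1 k2 + D1 (D2 h1) k1 k2 * h2 k1 k2) := by
  simp only [D1, D2, Pi.mul_apply]; ring

lemma D2D1_eq (h : ℕ → ℕ → ℝ) (k1 k2 : ℕ) :
    D1 h k1 (k2 + 1) - D1 h k1 k2 = D1 (D2 h) k1 k2 := by
  simp only [D1, D2]; ring

end VbiAux

open VbiAux ENNReal in
/-- The Hardy–Krause type variation is submultiplicative up to an absolute constant: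
`V(h₁h₂) ≤ c V(h₁) V(h₂)`. -/
theorem variation_submultiplicative :
    ∃ c : ℝ≥0, ∀ h1 h2 : ℕ → ℕ → ℝ, Vbi (h1 * h2) ≤ c * Vbi h1 * Vbi h2 := by
  refine ⟨9, fun h1 h2 => ?_⟩
  set X := Vbi h1 * Vbi h2 with hX
  -- bound on the sup term
  have hA : Av (h1 * h2) ≤ Av h1 * Av h2 := by
    refine iSup_le fun k1 => iSup_le fun k2 => ?_
    have : (h1 * h2) k1 k2 = h1 k1 k2 * h2 k1 k2 := rfl
    rw [this, ofReal_abs_mul]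
    exact mul_le_mul' (le_Av h1 k1 k2) (le_Av h2 k1 k2)
  -- bound on the B term
  have hB : Bv (h1 * h2) ≤ Av h1 * Bv h2 + Bv h1 * Av h2 := by
    refine iSup_le fun k1 => ?_
    calc ∑' k2, ENNReal.ofReal |D2 (h1 * h2) k1 k2|
        ≤ ∑' k2, (Av h1 * ENNReal.ofReal |D2 h2 k1 k2|
            + ENNReal.ofReal |D2 h1 k1 k2| * Av h2) := by
          refine ENNReal.tsum_le_tsum fun k2 => ?_
          rw [D2_mul]
          refine (ofReal_abs_add _ _).trans ?_
          rw [ofReal_abs_mul, ofReal_abs_mul]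
          exact add_le_add (mul_le_mul' (le_Av h1 k1 (k2 + 1)) le_rfl)
            (mul_le_mul' le_rfl (le_Av h2 k1 k2))
      _ = Av h1 * (∑' k2, ENNReal.ofReal |D2 h2 k1 k2|)
            + (∑' k2, ENNReal.ofReal |D2 h1 k1 k2|) * Av h2 := by
          rw [ENNReal.tsum_add, ENNReal.tsum_mul_left, ENNReal.tsum_mul_right]
      _ ≤ Av h1 * Bv h2 + Bv h1 * Av h2 := by
          gcongr
          exacts [le_Bv h2 k1, le_Bv h1 k1]
  -- bound on the C term
  have hC : Cv (h1 * h2) ≤ Av h1 * Cv h2 + Cv h1 * Av h2 := by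
    refine iSup_le fun k2 => ?_
    calc ∑' k1, ENNReal.ofReal |D1 (h1 * h2) k1 k2|
        ≤ ∑' k1, (Av h1 * ENNReal.ofReal |D1 h2 k1 k2|
            + ENNReal.ofReal |D1 h1 k1 k2| * Av h2) := by
          refine ENNReal.tsum_le_tsum fun k1 => ?_
          rw [D1_mul]
          refine (ofReal_abs_add _ _).trans ?_
          rw [ofReal_abs_mul, ofReal_abs_mul]
          exact add_le_add (mul_le_mul' (le_Av h1 (k1 + 1) k2) le_rfl)
            (mul_le_mul' le_rfl (le_Av h2 k1 k2))
      _ = Av h1 * (∑' k1, ENNReal.ofReal |D1 h2 k1 k2|)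
            + (∑' k1, ENNReal.ofReal |D1 h1 k1 k2|) * Av h2 := by
          rw [ENNReal.tsum_add, ENNReal.tsum_mul_left, ENNReal.tsum_mul_right]
      _ ≤ Av h1 * Cv h2 + Cv h1 * Av h2 := by
          gcongr
          exacts [le_Cv h2 k2, le_Cv h1 k2]
  -- bound on the E term
  have hE : Ev (h1 * h2) ≤ Av h1 * Ev h2 + (Cv h1 + Ev h1) * Bv h2
      + ((Bv h1 + Ev h1) * Cv h2 + Ev h1 * Av h2) := by
    have step : Ev (h1 * h2) ≤
        (∑' (k1 : ℕ) (k2 : ℕ), (ENNReal.ofReal |h1 (k1+1) (k2+1)| * ENNReal.ofReal |D1 (D2 h2) k1 k2|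
            + ENNReal.ofReal |D1 h1 k1 (k2+1)| * ENNReal.ofReal |D2 h2 k1 k2|
            + (ENNReal.ofReal |D2 h1 (k1+1) k2| * ENNReal.ofReal |D1 h2 k1 k2|
            + ENNReal.ofReal |D1 (D2 h1) k1 k2| * ENNReal.ofReal |h2 k1 k2|))) := by
      refine ENNReal.tsum_le_tsum fun k1 => ENNReal.tsum_le_tsum fun k2 => ?_
      rw [D1D2_mul]
      refine (ofReal_abs_add _ _).trans ?_
      gcongr
      · refine (ofReal_abs_add _ _).trans ?_
        rw [ofReal_abs_mul, ofReal_abs_mul]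
      · refine (ofReal_abs_add _ _).trans ?_
        rw [ofReal_abs_mul, ofReal_abs_mul]
    refine step.trans ?_
    rw [show (∑' (k1 : ℕ) (k2 : ℕ), (ENNReal.ofReal |h1 (k1+1) (k2+1)| * ENNReal.ofReal |D1 (D2 h2) k1 k2|
            + ENNReal.ofReal |D1 h1 k1 (k2+1)| * ENNReal.ofReal |D2 h2 k1 k2|
            + (ENNReal.ofReal |D2 h1 (k1+1) k2| * ENNReal.ofReal |D1 h2 k1 k2|
            + ENNReal.ofReal |D1 (D2 h1) k1 k2| * ENNReal.ofReal |h2 k1 k2|))) =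
        (∑' (k1 : ℕ) (k2 : ℕ), ENNReal.ofReal |h1 (k1+1) (k2+1)| * ENNReal.ofReal |D1 (D2 h2) k1 k2|)
        + (∑' (k1 : ℕ) (k2 : ℕ), ENNReal.ofReal |D1 h1 k1 (k2+1)| * ENNReal.ofReal |D2 h2 k1 k2|)
        + ((∑' (k1 : ℕ) (k2 : ℕ), ENNReal.ofReal |D2 h1 (k1+1) k2| * ENNReal.ofReal |D1 h2 k1 k2|)
        + (∑' (k1 : ℕ) (k2 : ℕ), ENNReal.ofReal |D1 (D2 h1) k1 k2| * ENNReal.ofReal |h2 k1 k2|)) by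
      simp only [ENNReal.tsum_add]]
    gcongr ?_ + ?_ + (?_ + ?_)
    -- term 1
    · calc _ ≤ ∑' (k1 : ℕ) (k2 : ℕ), Av h1 * ENNReal.ofReal |D1 (D2 h2) k1 k2| := by
            gcongr with k1 k2
            exact le_Av h1 (k1 + 1) (k2 + 1)
        _ = Av h1 * Ev h2 := by
            rw [Ev]; simp only [ENNReal.tsum_mul_left]
    -- term 2
    · have key : ∀ k1, (∑' k2, ENNReal.ofReal |D1 h1 k1 (k2+1)| * ENNReal.ofReal |D2 h2 k1 k2|)
          ≤ (ENNReal.ofReal |D1 h1 k1 0| + ∑' j, ENNReal.ofReal |D1 (D2 h1) k1 j|) * Bv h2 := by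
        intro k1
        calc ∑' k2, ENNReal.ofReal |D1 h1 k1 (k2+1)| * ENNReal.ofReal |D2 h2 k1 k2|
            ≤ ∑' k2, (ENNReal.ofReal |D1 h1 k1 0| + ∑' j, ENNReal.ofReal |D1 (D2 h1) k1 j|)
                * ENNReal.ofReal |D2 h2 k1 k2| := by
              gcongr with k2
              have := telescope (fun j => D1 h1 k1 j) (k2 + 1)
              simpa only [D2D1_eq] using this
          _ = (ENNReal.ofReal |D1 h1 k1 0| + ∑' j, ENNReal.ofReal |D1 (D2 h1) k1 j|)
                * ∑' k2, ENNReal.ofReal |D2 h2 k1 k2| := ENNReal.tsum_mul_left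
          _ ≤ _ := by gcongr; exact le_Bv h2 k1
      calc _ ≤ ∑' k1, (ENNReal.ofReal |D1 h1 k1 0| + ∑' j, ENNReal.ofReal |D1 (D2 h1) k1 j|) * Bv h2 :=
            ENNReal.tsum_le_tsum key
        _ = ((∑' k1, ENNReal.ofReal |D1 h1 k1 0|)
              + ∑' (k1 : ℕ) (j : ℕ), ENNReal.ofReal |D1 (D2 h1) k1 j|) * Bv h2 := by
            rw [ENNReal.tsum_mul_right, ENNReal.tsum_add]
        _ ≤ (Cv h1 + Ev h1) * Bv h2 := by
            gcongr
            · exact le_Cv h1 0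
            · exact le_of_eq rfl
    -- term 3
    · have key : ∀ k2, (∑' k1, ENNReal.ofReal |D2 h1 (k1+1) k2| * ENNReal.ofReal |D1 h2 k1 k2|)
          ≤ (ENNReal.ofReal |D2 h1 0 k2| + ∑' j, ENNReal.ofReal |D1 (D2 h1) j k2|) * Cv h2 := by
        intro k2
        calc ∑' k1, ENNReal.ofReal |D2 h1 (k1+1) k2| * ENNReal.ofReal |D1 h2 k1 k2|
            ≤ ∑' k1, (ENNReal.ofReal |D2 h1 0 k2| + ∑' j, ENNReal.ofReal |D1 (D2 h1) j k2|)
                * ENNReal.ofReal |D1 h2 k1 k2| := by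
              gcongr with k1
              exact telescope (fun j => D2 h1 j k2) (k1 + 1)
          _ = (ENNReal.ofReal |D2 h1 0 k2| + ∑' j, ENNReal.ofReal |D1 (D2 h1) j k2|)
                * ∑' k1, ENNReal.ofReal |D1 h2 k1 k2| := ENNReal.tsum_mul_left
          _ ≤ _ := by gcongr; exact le_Cv h2 k2
      calc (∑' (k1 : ℕ) (k2 : ℕ), ENNReal.ofReal |D2 h1 (k1+1) k2| * ENNReal.ofReal |D1 h2 k1 k2|)
          = ∑' (k2 : ℕ) (k1 : ℕ), ENNReal.ofReal |D2 h1 (k1+1) k2| * ENNReal.ofReal |D1 h2 k1 k2| :=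
            ENNReal.tsum_comm
        _ ≤ ∑' k2, (ENNReal.ofReal |D2 h1 0 k2| + ∑' j, ENNReal.ofReal |D1 (D2 h1) j k2|) * Cv h2 :=
            ENNReal.tsum_le_tsum key
        _ = ((∑' k2, ENNReal.ofReal |D2 h1 0 k2|)
              + ∑' (k2 : ℕ) (j : ℕ), ENNReal.ofReal |D1 (D2 h1) j k2|) * Cv h2 := by
            rw [ENNReal.tsum_mul_right, ENNReal.tsum_add]
        _ ≤ (Bv h1 + Ev h1) * Cv h2 := by
            gcongr
            · exact le_Bv h1 0
            · rw [Ev]; exact le_of_eq ENNReal.tsum_comm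
    -- term 4
    · calc _ ≤ ∑' (k1 : ℕ) (k2 : ℕ), ENNReal.ofReal |D1 (D2 h1) k1 k2| * Av h2 := by
            gcongr with k1 k2
            exact le_Av h2 k1 k2
        _ = Ev h1 * Av h2 := by
            rw [Ev]; simp only [ENNReal.tsum_mul_right]
  -- put it all together
  have hV1 : Vbi (h1 * h2) = Av (h1*h2) + Bv (h1*h2) + Cv (h1*h2) + Ev (h1*h2) := rfl
  have bound : Vbi (h1 * h2) ≤ 9 * X := by
    rw [hV1]
    calc Av (h1*h2) + Bv (h1*h2) + Cv (h1*h2) + Ev (h1*h2)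
        ≤ (Av h1 * Av h2) + (Av h1 * Bv h2 + Bv h1 * Av h2)
            + (Av h1 * Cv h2 + Cv h1 * Av h2)
            + (Av h1 * Ev h2 + (Cv h1 + Ev h1) * Bv h2
              + ((Bv h1 + Ev h1) * Cv h2 + Ev h1 * Av h2)) := by
          gcongr
      _ ≤ X + (X + X) + (X + X) + (X + X + (X + X)) := by
          gcongr <;>
            first
              | exact mul_le_mul' (Av_le h1) (Av_le h2)
              | exact mul_le_mul' (Av_le h1) (Bv_le h2)
              | exact mul_le_mul' (Bv_le h1) (Av_le h2)
              | exact mul_le_mul' (Av_le h1) (Cv_le h2)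
              | exact mul_le_mul' (Cv_le h1) (Av_le h2)
              | exact mul_le_mul' (Av_le h1) (Ev_le h2)
              | exact mul_le_mul' (CvEv_le h1) (Bv_le h2)
              | exact mul_le_mul' (BvEv_le h1) (Cv_le h2)
              | exact mul_le_mul' (Ev_le h1) (Av_le h2)
      _ = 9 * X := by ring
  calc Vbi (h1 * h2) ≤ 9 * X := bound
    _ = ↑(9 : ℝ≥0) * Vbi h1 * Vbi h2 := by
      rw [hX]; push_cast; ring
end
end
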